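/- Let G₆ be the subgroup of G₇ generated by s and u. Then z³ = (s·t·u)³ = s·u·s·u·s·u = u·s·u·s·u·s, the element z³ has order 4, the center of G₆ equals the cyclic subgroup generated by z³, and Z(G₆) = G₆ ∩ Z(G₇). -/

import Mathlib

/-!
Since `z` is central and `t = z (us)⁻¹`, the relation `t³ = 1` gives `z³ = (us)³`, and conjugating
by `s` gives `z³ = (su)³`. With `w = z³`, `s₁ = u s u⁻¹` and `s₂ = u⁻¹ s u`, the relation
`(su)³ = w` reads `s s₁ = w s₂`; conjugating by `u` gives `s₁ s₂ = w s` and `s₂ s = w s₁`. Hence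
`(s s₁)² = (s₁ s)² = w²`, and as `s₁ s = (s s₁)⁻¹` this forces `w⁴ = 1`. The same relations bring
every element of `G₆` to the form `w^k s^a s₁^b u^i` with `a, b < 2`, `i < 3` (a lift of `A₄`).
In the reflection representation reduced mod 13, `w² ≠ 1`, and no such element with
`(a, b, i) ≠ 0` commutes with both `s` and `u`; so `Z(G₆) = ⟨w⟩`, which is central in `G₇`.
-/

open Pointwise

namespace Tetra

def rels : Set (FreeGroup (Fin 3)) :=
  { FreeGroup.of 0 ^ 2, FreeGroup.of 1 ^ 3, FreeGroup.of 2 ^ 3,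
    FreeGroup.of 0 * FreeGroup.of 1 * FreeGroup.of 2 *
      (FreeGroup.of 1 * FreeGroup.of 2 * FreeGroup.of 0)⁻¹,
    FreeGroup.of 0 * FreeGroup.of 1 * FreeGroup.of 2 *
      (FreeGroup.of 2 * FreeGroup.of 0 * FreeGroup.of 1)⁻¹ }

/-- The group `G₇ = ⟨s, t, u | s² = t³ = u³ = 1, stu = tus = ust⟩`. -/
abbrev G7 := PresentedGroup rels

def s : G7 := PresentedGroup.of 0
def t : G7 := PresentedGroup.of 1
def u : G7 := PresentedGroup.of 2
def z : G7 := s * t * u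

def G6 : Subgroup G7 := Subgroup.closure {s, u}

lemma s_sq : s ^ 2 = 1 :=
  PresentedGroup.one_of_mem (show FreeGroup.of 0 ^ 2 ∈ rels by simp [rels])

lemma t_pow_three : t ^ 3 = 1 :=
  PresentedGroup.one_of_mem (show FreeGroup.of 1 ^ 3 ∈ rels by simp [rels])

lemma u_pow_three : u ^ 3 = 1 :=
  PresentedGroup.one_of_mem (show FreeGroup.of 2 ^ 3 ∈ rels by simp [rels])

lemma z_eq_tus : z = t * u * s :=
  PresentedGroup.mk_eq_mk_of_mul_inv_mem (rels := rels)
    (x := FreeGroup.of 0 * FreeGroup.of 1 * FreeGroup.of 2)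
    (y := FreeGroup.of 1 * FreeGroup.of 2 * FreeGroup.of 0) (by simp [rels])

lemma z_eq_ust : z = u * s * t :=
  PresentedGroup.mk_eq_mk_of_mul_inv_mem (rels := rels)
    (x := FreeGroup.of 0 * FreeGroup.of 1 * FreeGroup.of 2)
    (y := FreeGroup.of 2 * FreeGroup.of 0 * FreeGroup.of 1) (by simp [rels])

lemma s_inv : s⁻¹ = s := inv_eq_of_mul_eq_one_right (by rw [← sq, s_sq])

lemma u_inv : u⁻¹ = u ^ 2 := inv_eq_of_mul_eq_one_right (by rw [← pow_succ', u_pow_three])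

lemma commute_s_z : Commute s z := by
  show s * z = z * s
  nth_rw 1 [z_eq_tus]
  simp only [z, mul_assoc]

lemma commute_t_z : Commute t z := by
  show t * z = z * t
  nth_rw 1 [z_eq_ust]
  rw [z_eq_tus]
  simp only [mul_assoc]

lemma commute_u_z : Commute u z := by
  show u * z = z * u
  nth_rw 2 [z_eq_ust]
  simp only [z, mul_assoc]

lemma z_mem_center : z ∈ Subgroup.center G7 := by
  simp only [Subgroup.center_eq_iInf (PresentedGroup.closure_range_of rels), Subgroup.mem_iInf,
    Set.forall_mem_range, Subgroup.mem_centralizer_singleton_iff]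
  intro i
  fin_cases i
  exacts [commute_s_z.eq.symm, commute_t_z.eq.symm, commute_u_z.eq.symm]

lemma commute_z (g : G7) : Commute z g := (Subgroup.mem_center_iff.mp z_mem_center g).symm

lemma z_pow_three_eq_us_pow_three : z ^ 3 = (u * s) ^ 3 := by
  have ht : t = z * (u * s)⁻¹ := by
    rw [(commute_z _).eq]
    exact eq_inv_mul_of_mul_eq z_eq_ust.symm
  have h := t_pow_three
  rwa [ht, (commute_z _).mul_pow, inv_pow, mul_inv_eq_one] at h

lemma z_pow_three_eq_su_pow_three : z ^ 3 = (s * u) ^ 3 := by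
  have h : SemiconjBy s ((u * s) ^ 3) ((s * u) ^ 3) :=
    SemiconjBy.pow_right (by simp only [SemiconjBy, mul_assoc]) 3
  rw [← z_pow_three_eq_us_pow_three, SemiconjBy, ← ((commute_z s).pow_left 3).eq] at h
  exact mul_right_cancel h

def s₁ : G7 := u * s * u⁻¹
def s₂ : G7 := u⁻¹ * s * u

lemma s₁_sq : s₁ ^ 2 = 1 := by
  rw [s₁, conj_pow, s_sq, mul_one, mul_inv_cancel]

lemma s₁_inv : s₁⁻¹ = s₁ := inv_eq_of_mul_eq_one_right (by rw [← sq, s₁_sq])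

lemma u_conj_s : u * s * u⁻¹ = s₁ := rfl

lemma u_conj_s₁ : u * s₁ * u⁻¹ = s₂ := by
  calc u * s₁ * u⁻¹ = u ^ 3 * s₂ * (u ^ 3)⁻¹ := by
        simp only [s₁, s₂, pow_succ, pow_zero, one_mul]; group
    _ = s₂ := by rw [u_pow_three, one_mul, inv_one, mul_one]

lemma u_conj_s₂ : u * s₂ * u⁻¹ = s := by simp only [s₂]; group

lemma u_conj_z_pow_three : u * z ^ 3 * u⁻¹ = z ^ 3 := by
  rw [← ((commute_z u).pow_left 3).eq, mul_inv_cancel_right]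

lemma s_mul_s₁ : s * s₁ = z ^ 3 * s₂ :=
  calc s * s₁ = (s * u) ^ 3 * (u⁻¹ * s⁻¹ * (u ^ 2)⁻¹) := by
        simp only [s₁, pow_succ, pow_zero, one_mul]; group
    _ = z ^ 3 * s₂ := by rw [← z_pow_three_eq_su_pow_three, s_inv, ← u_inv, inv_inv]; rfl

lemma s₁_mul_s₂ : s₁ * s₂ = z ^ 3 * s := by
  simpa only [map_mul, MulAut.conj_apply, u_conj_s, u_conj_s₁, u_conj_s₂, u_conj_z_pow_three]
    using congrArg (MulAut.conj u) s_mul_s₁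

lemma s₂_mul_s : s₂ * s = z ^ 3 * s₁ := by
  simpa only [map_mul, MulAut.conj_apply, u_conj_s, u_conj_s₁, u_conj_s₂, u_conj_z_pow_three]
    using congrArg (MulAut.conj u) s₁_mul_s₂

lemma s_mul_s₁_mul_s : s * s₁ * s = (z ^ 3) ^ 2 * s₁ := by
  rw [s_mul_s₁, mul_assoc, s₂_mul_s, ← mul_assoc, ← sq]

lemma s₁_mul_s_mul_s₁ : s₁ * s * s₁ = (z ^ 3) ^ 2 * s := by
  rw [mul_assoc, s_mul_s₁, ((commute_z s₁).pow_left 3).symm.left_comm, s₁_mul_s₂, ← mul_assoc, ← sq]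

lemma z_pow_three_pow_four : (z ^ 3) ^ 4 = 1 := by
  have h₁ : (s * s₁) ^ 2 = (z ^ 3) ^ 2 := by
    rw [sq, ← mul_assoc, s_mul_s₁_mul_s, mul_assoc, ← sq s₁, s₁_sq, mul_one]
  have h₂ : (s₁ * s) ^ 2 = (z ^ 3) ^ 2 := by
    rw [sq, ← mul_assoc, s₁_mul_s_mul_s₁, mul_assoc, ← sq s, s_sq, mul_one]
  calc (z ^ 3) ^ 4 = (s * s₁) ^ 2 * (s₁ * s) ^ 2 := by rw [h₁, h₂, ← pow_add]
    _ = (s * s₁) ^ 2 * (s * s₁)⁻¹ ^ 2 := by rw [mul_inv_rev, s_inv, s₁_inv]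
    _ = 1 := by rw [inv_pow, mul_inv_cancel]

lemma commute_z_pow_three_pow (k : ℕ) (g : G7) : Commute ((z ^ 3) ^ k) g :=
  ((commute_z g).pow_left 3).pow_left k

lemma s₁_mul_s : s₁ * s = (z ^ 3) ^ 2 * (s * s₁) := by
  calc s₁ * s = s * (s * s₁ * s) := by rw [← mul_assoc, ← mul_assoc, ← sq, s_sq, one_mul]
    _ = (z ^ 3) ^ 2 * (s * s₁) := by
        rw [s_mul_s₁_mul_s, (commute_z_pow_three_pow 2 s).symm.left_comm]

lemma s₁_pow_mul_s (b : ℕ) : s₁ ^ b * s = (z ^ 3) ^ (2 * b) * (s * s₁ ^ b) := by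
  induction b with
  | zero => simp
  | succ b ih =>
    rw [pow_succ', mul_assoc, ih, (commute_z_pow_three_pow _ s₁).symm.left_comm, ← mul_assoc s₁,
      s₁_mul_s, mul_add, mul_one, pow_add]
    simp only [mul_assoc]

lemma s₂_eq : s₂ = (z ^ 3) ^ 3 * (s * s₁) := by
  rw [s_mul_s₁, ← mul_assoc, ← pow_succ, z_pow_three_pow_four, one_mul]

-- The preimage in `G₆` of the Klein four-subgroup of `G₆ ⧸ ⟨z³⟩ ≅ A₄`.
def kleinLift : Set G7 := {g | ∃ k a b : ℕ, g = (z ^ 3) ^ k * (s ^ a * s₁ ^ b)}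

lemma mul_z_pow_three_pow_mem_kleinLift {g : G7} (hg : g ∈ kleinLift) (n : ℕ) :
    g * (z ^ 3) ^ n ∈ kleinLift := by
  obtain ⟨k, a, b, rfl⟩ := hg
  exact ⟨n + k, a, b, by rw [← (commute_z_pow_three_pow n _).eq, ← mul_assoc, ← pow_add]⟩

lemma mul_s_mem_kleinLift {g : G7} (hg : g ∈ kleinLift) : g * s ∈ kleinLift := by
  obtain ⟨k, a, b, rfl⟩ := hg
  refine ⟨k + 2 * b, a + 1, b, ?_⟩
  rw [mul_assoc, mul_assoc, s₁_pow_mul_s, (commute_z_pow_three_pow _ _).symm.left_comm,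
    ← mul_assoc, ← pow_add, ← mul_assoc (s ^ a), ← pow_succ]

lemma mul_s₁_mem_kleinLift {g : G7} (hg : g ∈ kleinLift) : g * s₁ ∈ kleinLift := by
  obtain ⟨k, a, b, rfl⟩ := hg
  exact ⟨k, a, b + 1, by rw [mul_assoc, mul_assoc, ← pow_succ]⟩

lemma mul_mem_kleinLift {g c : G7} (hg : g ∈ kleinLift) (hc : c ∈ ({s, s₁, s₂} : Set G7)) :
    g * c ∈ kleinLift := by
  rcases hc with rfl | rfl | rfl
  · exact mul_s_mem_kleinLift hg
  · exact mul_s₁_mem_kleinLift hg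
  · rw [s₂_eq, ← mul_assoc, ← mul_assoc]
    exact mul_s₁_mem_kleinLift (mul_s_mem_kleinLift (mul_z_pow_three_pow_mem_kleinLift hg 3))

lemma u_conj_mem {c : G7} (hc : c ∈ ({s, s₁, s₂} : Set G7)) :
    u * c * u⁻¹ ∈ ({s, s₁, s₂} : Set G7) := by
  rcases hc with rfl | rfl | rfl
  · exact Or.inr (Or.inl u_conj_s)
  · exact Or.inr (Or.inr u_conj_s₁)
  · exact Or.inl u_conj_s₂

lemma u_pow_mul_s (i : ℕ) : ∃ c ∈ ({s, s₁, s₂} : Set G7), u ^ i * s = c * u ^ i := by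
  induction i with
  | zero => exact ⟨s, Or.inl rfl, by simp⟩
  | succ i ih =>
    obtain ⟨c, hc, h⟩ := ih
    refine ⟨u * c * u⁻¹, u_conj_mem hc, ?_⟩
    rw [pow_succ', mul_assoc, h]
    simp only [mul_assoc, inv_mul_cancel_left]

def normalForms : Set G7 := {g | ∃ n ∈ kleinLift, ∃ i : ℕ, g = n * u ^ i}

lemma mul_u_mem_normalForms {g : G7} (hg : g ∈ normalForms) : g * u ∈ normalForms := by
  obtain ⟨n, hn, i, rfl⟩ := hg
  exact ⟨n, hn, i + 1, by rw [mul_assoc, ← pow_succ]⟩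

lemma mul_s_mem_normalForms {g : G7} (hg : g ∈ normalForms) : g * s ∈ normalForms := by
  obtain ⟨n, hn, i, rfl⟩ := hg
  obtain ⟨c, hc, h⟩ := u_pow_mul_s i
  exact ⟨n * c, mul_mem_kleinLift hn hc, i, by rw [mul_assoc, h, mul_assoc]⟩

lemma G6_subset_normalForms : (G6 : Set G7) ⊆ normalForms := by
  intro g hg
  induction hg using Subgroup.closure_induction_right with
  | one => exact ⟨1, ⟨0, 0, 0, by simp⟩, 0, by simp⟩
  | mul_right g _ c hc ih =>
    rcases hc with rfl | rfl
    · exact mul_s_mem_normalForms ih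
    · exact mul_u_mem_normalForms ih
  | mul_inv_cancel g _ c hc ih =>
    rcases hc with rfl | rfl
    · rw [s_inv]; exact mul_s_mem_normalForms ih
    · rw [u_inv, sq, ← mul_assoc]; exact mul_u_mem_normalForms (mul_u_mem_normalForms ih)

lemma exists_reduced_form {g : G7} (hg : g ∈ G6) :
    ∃ (k : ℕ) (a b : Fin 2) (i : Fin 3),
      g = (z ^ 3) ^ k * (s ^ (a : ℕ) * s₁ ^ (b : ℕ) * u ^ (i : ℕ)) := by
  obtain ⟨_, ⟨k, a, b, rfl⟩, i, rfl⟩ := G6_subset_normalForms hg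
  refine ⟨k, ⟨a % 2, a.mod_lt two_pos⟩, ⟨b % 2, b.mod_lt two_pos⟩,
    ⟨i % 3, i.mod_lt three_pos⟩, ?_⟩
  rw [← pow_eq_pow_mod a s_sq, ← pow_eq_pow_mod b s₁_sq, ← pow_eq_pow_mod i u_pow_three,
    mul_assoc]

-- The reflection representation of `G₇` reduced mod 13 (`ZMod 13` has the 12th roots of unity).
def Smat : GL (Fin 2) (ZMod 13) := ⟨!![3, 7; 10, 10], !![3, 7; 10, 10], by decide, by decide⟩
def Tmat : GL (Fin 2) (ZMod 13) := ⟨!![1, 0; 0, 3], !![1, 0; 0, 9], by decide, by decide⟩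
def Umat : GL (Fin 2) (ZMod 13) := ⟨!![6, 1; 11, 11], !![8, 4; 5, 2], by decide, by decide⟩

lemma lift_rels_eq_one : ∀ r ∈ rels, FreeGroup.lift ![Smat, Tmat, Umat] r = 1 := by
  simp only [rels, Set.mem_insert_iff, Set.mem_singleton_iff]
  rintro r (rfl | rfl | rfl | rfl | rfl) <;>
    simp only [map_mul, map_pow, map_inv, FreeGroup.lift_apply_of, Matrix.cons_val_zero,
      Matrix.cons_val_one, Matrix.cons_val_two] <;>
    decide

def rep : G7 →* GL (Fin 2) (ZMod 13) := PresentedGroup.toGroup lift_rels_eq_one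

lemma rep_s : rep s = Smat := PresentedGroup.toGroup.of lift_rels_eq_one
lemma rep_t : rep t = Tmat := PresentedGroup.toGroup.of lift_rels_eq_one
lemma rep_u : rep u = Umat := PresentedGroup.toGroup.of lift_rels_eq_one

lemma rep_z_pow_three_sq_ne_one : rep ((z ^ 3) ^ 2) ≠ 1 := by
  rw [map_pow, map_pow, z, map_mul, map_mul, rep_s, rep_t, rep_u]
  decide

lemma eq_zero_of_commute_Smat_Umat : ∀ (a b : Fin 2) (i : Fin 3),
    Smat ^ (a : ℕ) * (Umat * Smat * Umat⁻¹) ^ (b : ℕ) * Umat ^ (i : ℕ) * Smat =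
        Smat * (Smat ^ (a : ℕ) * (Umat * Smat * Umat⁻¹) ^ (b : ℕ) * Umat ^ (i : ℕ)) ∧
      Smat ^ (a : ℕ) * (Umat * Smat * Umat⁻¹) ^ (b : ℕ) * Umat ^ (i : ℕ) * Umat =
        Umat * (Smat ^ (a : ℕ) * (Umat * Smat * Umat⁻¹) ^ (b : ℕ) * Umat ^ (i : ℕ)) →
    a = 0 ∧ b = 0 ∧ i = 0 := by
  decide

lemma mem_zpowers_of_commute {g : G7} (hg : g ∈ G6) (hs : Commute s g) (hu : Commute u g) :
    g ∈ Subgroup.zpowers (z ^ 3) := by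
  obtain ⟨k, a, b, i, rfl⟩ := exists_reduced_form hg
  set x := s ^ (a : ℕ) * s₁ ^ (b : ℕ) * u ^ (i : ℕ)
  have hx : ∀ c, Commute c ((z ^ 3) ^ k * x) → Commute (rep x) (rep c) := fun c hc => by
    simpa only [inv_mul_cancel_left] using
      ((commute_z_pow_three_pow k c).inv_left.mul_left hc.symm).map rep
  have hrep : rep x = Smat ^ (a : ℕ) * (Umat * Smat * Umat⁻¹) ^ (b : ℕ) * Umat ^ (i : ℕ) := by
    simp only [x, s₁, map_mul, map_pow, map_inv, rep_s, rep_u]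
  obtain ⟨rfl, rfl, rfl⟩ := eq_zero_of_commute_Smat_Umat a b i
    ⟨by simpa only [hrep, rep_s] using (hx s hs).eq, by simpa only [hrep, rep_u] using (hx u hu).eq⟩
  simp [x]

lemma _root_.Subgroup.map_subtype_center {G : Type*} [Group G] (H : Subgroup G) :
    (Subgroup.center H).map H.subtype = H ⊓ Subgroup.centralizer H := by
  ext g
  simp only [Subgroup.mem_map, Subgroup.mem_center_iff, Subgroup.mem_inf,
    Subgroup.mem_centralizer_iff, SetLike.mem_coe, Subgroup.subtype_apply]
  constructor
  · rintro ⟨g, hg, rfl⟩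
    exact ⟨g.2, fun h hh => congrArg Subtype.val (hg ⟨h, hh⟩)⟩
  · rintro ⟨hg, hc⟩
    exact ⟨⟨g, hg⟩, fun h => Subtype.ext (hc h h.2), rfl⟩

lemma z_pow_three_mem_G6 : z ^ 3 ∈ G6 := by
  rw [z_pow_three_eq_su_pow_three]
  exact pow_mem (mul_mem (Subgroup.subset_closure (by simp)) (Subgroup.subset_closure (by simp))) 3

lemma map_subtype_center_G6 : (Subgroup.center G6).map G6.subtype = Subgroup.zpowers (z ^ 3) := by
  rw [Subgroup.map_subtype_center]
  refine le_antisymm ?_ ?_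
  · intro g hg
    obtain ⟨hg, hc⟩ := Subgroup.mem_inf.mp hg
    rw [G6, Subgroup.centralizer_closure, Subgroup.mem_centralizer_iff] at hc
    exact mem_zpowers_of_commute hg (hc s (by simp)) (hc u (by simp))
  · rw [Subgroup.zpowers_le]
    exact ⟨z_pow_three_mem_G6, Subgroup.center_le_centralizer _ (pow_mem z_mem_center 3)⟩

lemma orderOf_z_pow_three : orderOf (z ^ 3) = 4 :=
  orderOf_eq_prime_pow (p := 2) (n := 1)
    (fun h => rep_z_pow_three_sq_ne_one (by rw [pow_one] at h; rw [h, map_one]))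
    z_pow_three_pow_four

theorem statement1 :
    z ^ 3 = s * u * s * u * s * u ∧
    z ^ 3 = u * s * u * s * u * s ∧
    orderOf (z ^ 3) = 4 ∧
    (Subgroup.center ↥G6).map G6.subtype = Subgroup.zpowers (z ^ 3) ∧
    (Subgroup.center ↥G6).map G6.subtype = G6 ⊓ Subgroup.center G7 := by
  refine ⟨?_, ?_, orderOf_z_pow_three, map_subtype_center_G6, le_antisymm ?_ ?_⟩
  · rw [z_pow_three_eq_su_pow_three]; simp only [pow_succ, pow_zero, one_mul, mul_assoc]
  · rw [z_pow_three_eq_us_pow_three]; simp only [pow_succ, pow_zero, one_mul, mul_assoc]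
  · rw [map_subtype_center_G6, Subgroup.zpowers_le]
    exact ⟨z_pow_three_mem_G6, pow_mem z_mem_center 3⟩
  · rw [Subgroup.map_subtype_center]
    exact inf_le_inf_left _ (Subgroup.center_le_centralizer _)

end Tetra
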